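/- Under assumptions (A5) and (A7): if a couple (x, x̄) of bounded continuous functions is proximal (for every ε > 0 and E > 0 there exist infinitely many disjoint intervals of length at least E on which ‖x(t) − x̄(t)‖ < ε), then the couple (φ_x, φ_{x̄}) of corresponding bounded solutions of the replicator equation is also proximal. -/

import Mathlib

open MeasureTheory Set Filter

abbrev Eu (k : ℕ) := EuclideanSpace ℝ (Fin k)

noncomputable def eAt {n : ℕ} (A : Matrix (Fin n) (Fin n) ℝ) (t : ℝ) :
    Eu n →L[ℝ] Eu n :=
  Matrix.toEuclideanCLM (𝕜 := ℝ) (NormedSpace.exp (t • A))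

noncomputable def mulA {n : ℕ} (A : Matrix (Fin n) (Fin n) ℝ) : Eu n →L[ℝ] Eu n :=
  Matrix.toEuclideanCLM (𝕜 := ℝ) A

/-- A pair of functions is proximal if for all ε > 0, E > 0 there are infinitely
many disjoint intervals of length ≥ E on which the functions are ε-close. -/
def Proximal {k : ℕ} (ψ ψb : ℝ → Eu k) : Prop :=
  ∀ ε > (0:ℝ), ∀ E > (0:ℝ), ∃ a l : ℕ → ℝ,
    (∀ i, E ≤ l i) ∧
    (Pairwise fun i j => Disjoint (Icc (a i) (a i + l i)) (Icc (a j) (a j + l j))) ∧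
    ∀ i, ∀ t ∈ Icc (a i) (a i + l i), ‖ψ t - ψb t‖ < ε

/-! By variation of constants, `y t - ȳ t = ∫_{s ≤ t} e^{(t-s)A} (g(x s, y s) - g(x̄ s, ȳ s)) ds`.
Splitting this integral at `t - T`, on any stretch where `‖x - x̄‖ ≤ δ` we get
`‖y t - ȳ t‖ ≤ 2NM₀/ω · e^{-ωT} + NL₂/ω · δ + θ · sup_{(t-T, t]} ‖y - ȳ‖` with `θ = NL₃/ω < 1`.
Iterating this `k` times along the stretch, the bound falls below any `ε` once `T` is large, `δ`
is small and an initial piece of length `kT` is discarded; so every long interval on which `x, x̄`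
are `δ`-close contains a long interval on which `y, ȳ` are `ε`-close. -/

lemma exp_neg_mul_sub_eq {ω : ℝ} (t : ℝ) :
    (fun s => Real.exp (-ω * (t - s))) = fun s => Real.exp (ω * s) * Real.exp (-ω * t) := by
  funext s
  rw [← Real.exp_add]
  ring_nf

lemma integrableOn_exp_neg_mul_sub_Iic {ω : ℝ} (hω : 0 < ω) (t u : ℝ) :
    IntegrableOn (fun s => Real.exp (-ω * (t - s))) (Iic u) := by
  rw [exp_neg_mul_sub_eq]
  exact (integrableOn_exp_mul_Iic hω u).mul_const _

lemma integral_exp_neg_mul_sub_Iic {ω : ℝ} (hω : 0 < ω) (t u : ℝ) :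
    ∫ s in Iic u, Real.exp (-ω * (t - s)) = Real.exp (-ω * (t - u)) / ω := by
  rw [exp_neg_mul_sub_eq, integral_mul_const, integral_exp_mul_Iic hω, div_mul_eq_mul_div,
    ← Real.exp_add]
  ring_nf

section EAt

variable {n : ℕ} (A : Matrix (Fin n) (Fin n) ℝ)

lemma eAt_add (u v : ℝ) : eAt A (u + v) = eAt A u * eAt A v := by
  rw [eAt, eAt, eAt, ← map_mul, ← Matrix.exp_add_of_commute _ _
    ((Commute.refl A).smul_left u |>.smul_right v), add_smul]

lemma eAt_neg_apply_eAt_apply (u : ℝ) (w : Eu n) : eAt A (-u) (eAt A u w) = w := by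
  have h : eAt A (-u) * eAt A u = 1 := by
    rw [← eAt_add, neg_add_cancel, eAt, zero_smul, NormedSpace.exp_zero, map_one]
  exact congr($h w)

section

attribute [local instance] Matrix.linftyOpNormedRing Matrix.linftyOpNormedAlgebra

lemma continuous_eAt : Continuous (eAt A) :=
  (Matrix.toEuclideanCLM (𝕜 := ℝ) (n := Fin n)).toAlgEquiv.toLinearMap
    |>.continuous_of_finiteDimensional.comp
      (NormedSpace.exp_continuous.comp (continuous_id.smul continuous_const))

end

variable {μ : Measure ℝ}

lemma MeasureTheory.AEStronglyMeasurable.eAt_apply {f : ℝ → ℝ} (hf : Continuous f) {h : ℝ → Eu n}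
    (hh : AEStronglyMeasurable h μ) : AEStronglyMeasurable (fun s => eAt A (f s) (h s)) μ :=
  (ContinuousLinearMap.id ℝ (Eu n →L[ℝ] Eu n)).aestronglyMeasurable_comp₂
    ((continuous_eAt A).comp hf).aestronglyMeasurable hh

lemma aestronglyMeasurable_eAt_sub_apply_iff (t : ℝ) {h : ℝ → Eu n} :
    AEStronglyMeasurable (fun s => eAt A (t - s) (h s)) μ ↔ AEStronglyMeasurable h μ := by
  refine ⟨fun hF => ?_, AEStronglyMeasurable.eAt_apply A (continuous_sub_left t)⟩
  refine (hF.eAt_apply A (continuous_sub_right t)).congr (ae_of_all _ fun s => ?_)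
  simpa only [neg_sub] using eAt_neg_apply_eAt_apply A (t - s) (h s)

end EAt

/-- Up to its maximum (if any), `G` is covered by countably many half-lines `Iic q`, `q` rational,
each contained in some `Iic t` with `t ∈ G`. -/
lemma aestronglyMeasurable_restrict_of_forall_Iic {E : Type*} [TopologicalSpace E]
    [TopologicalSpace.PseudoMetrizableSpace E] {f : ℝ → E} {G : Set ℝ}
    (hG : ∀ t ∈ G, AEStronglyMeasurable f (volume.restrict (Iic t))) :
    AEStronglyMeasurable f (volume.restrict G) := by
  set S := {s ∈ G | ∀ t ∈ G, t ≤ s}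
  have hS : S.Subsingleton := fun s hs s' hs' => le_antisymm (hs'.2 s hs.1) (hs.2 s' hs'.1)
  have hcover : G ⊆ (⋃ q : {q : ℚ // ∃ t ∈ G, (q : ℝ) ≤ t}, Iic (q : ℝ)) ∪ S := by
    intro s hs
    by_cases hmax : ∀ t ∈ G, t ≤ s
    · exact Or.inr ⟨hs, hmax⟩
    · push Not at hmax
      obtain ⟨t, ht, hst⟩ := hmax
      obtain ⟨q, hsq, hqt⟩ := exists_rat_btwn hst
      exact Or.inl (mem_iUnion.2 ⟨⟨q, t, ht, hqt.le⟩, hsq.le⟩)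
  refine AEStronglyMeasurable.mono_set hcover (aestronglyMeasurable_union_iff.2 ⟨?_, ?_⟩)
  · refine aestronglyMeasurable_iUnion_iff.2 fun ⟨q, t, ht, hqt⟩ => ?_
    exact (hG t ht).mono_set (Iic_subset_Iic.2 hqt)
  · rw [Measure.restrict_eq_zero.2 (hS.measure_zero _)]
    exact aestronglyMeasurable_zero_measure f

/-- Where `s ↦ g (x s) (y s)` fails to be measurable on `Iic t`, the Bochner integral defining
`y t` is `0`; so `y` vanishes beyond the half-line on which the integrand is measurable. -/
lemma aestronglyMeasurable_of_eq_integral {m n : ℕ} {A : Matrix (Fin n) (Fin n) ℝ}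
    {g : Eu m → Eu n → Eu n} (hgc : Continuous fun p : Eu m × Eu n => g p.1 p.2)
    {x : ℝ → Eu m} (hxc : Continuous x) {y : ℝ → Eu n}
    (hy : ∀ t, y t = ∫ s in Iic t, eAt A (t - s) (g (x s) (y s))) :
    AEStronglyMeasurable (fun s => g (x s) (y s)) volume := by
  set G := {t | AEStronglyMeasurable (fun s => g (x s) (y s)) (volume.restrict (Iic t))}
  have hGlower : IsLowerSet G := fun t t' htt ht => ht.mono_set (Iic_subset_Iic.2 htt)
  have hy0 : ∀ t ∉ G, y t = 0 := fun t ht => by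
    rw [hy t]
    exact integral_undef fun hint =>
      ht ((aestronglyMeasurable_eAt_sub_apply_iff A t).1 hint.aestronglyMeasurable)
  have hGc : AEStronglyMeasurable (fun s => g (x s) (y s)) (volume.restrict Gᶜ) := by
    have hcont : Continuous fun s => g (x s) 0 := hgc.comp (hxc.prodMk continuous_const)
    refine hcont.aestronglyMeasurable.congr ?_
    refine ae_restrict_of_forall_mem hGlower.ordConnected.measurableSet.compl fun s hs => ?_
    simp only [hy0 s hs]
  have hunion := aestronglyMeasurable_union_iff.2
    ⟨aestronglyMeasurable_restrict_of_forall_Iic (G := G) fun t ht => ht, hGc⟩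
  rwa [union_compl_self, Measure.restrict_univ] at hunion

section Kernel

variable {n : ℕ} {A : Matrix (Fin n) (Fin n) ℝ} {N ω : ℝ}

lemma norm_eAt_sub_apply_le (hA : ∀ t : ℝ, 0 ≤ t → ‖eAt A t‖ ≤ N * Real.exp (-ω * t))
    {s t M : ℝ} (hst : s ≤ t) {v : Eu n} (hv : ‖v‖ ≤ M) :
    ‖eAt A (t - s) v‖ ≤ N * Real.exp (-ω * (t - s)) * M := by
  have hkernel := hA (t - s) (sub_nonneg.2 hst)
  exact (ContinuousLinearMap.le_opNorm _ _).trans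
    (mul_le_mul hkernel hv (norm_nonneg _) ((norm_nonneg _).trans hkernel))

lemma integrableOn_eAt_sub_apply (hω : 0 < ω)
    (hA : ∀ t : ℝ, 0 ≤ t → ‖eAt A t‖ ≤ N * Real.exp (-ω * t)) {h : ℝ → Eu n}
    (hh : AEStronglyMeasurable h volume) {M : ℝ} (hM : ∀ s, ‖h s‖ ≤ M) (t : ℝ) :
    IntegrableOn (fun s => eAt A (t - s) (h s)) (Iic t) := by
  refine Integrable.mono' (((integrableOn_exp_neg_mul_sub_Iic hω t t).const_mul N).mul_const M)
    ((aestronglyMeasurable_eAt_sub_apply_iff A t).2 hh.restrict) ?_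
  filter_upwards [ae_restrict_mem measurableSet_Iic] with s hs
  exact norm_eAt_sub_apply_le hA hs (hM s)

lemma norm_setIntegral_eAt_sub_apply_le (hω : 0 < ω)
    (hA : ∀ t : ℝ, 0 ≤ t → ‖eAt A t‖ ≤ N * Real.exp (-ω * t)) {u : ℝ → Eu n} {t T C D : ℝ}
    (hT : 0 < T) (hu : IntegrableOn (fun s => eAt A (t - s) (u s)) (Iic t))
    (hD : ∀ s, ‖u s‖ ≤ D) (hC : ∀ s ∈ Ioc (t - T) t, ‖u s‖ ≤ C) :
    ‖∫ s in Iic t, eAt A (t - s) (u s)‖ ≤ N * D / ω * Real.exp (-ω * T) + N * C / ω := by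
  set F := fun s => eAt A (t - s) (u s)
  have hN : 0 ≤ N := by simpa using (norm_nonneg _).trans (hA 0 le_rfl)
  have hC0 : 0 ≤ C := (norm_nonneg _).trans (hC t ⟨by linarith, le_rfl⟩)
  have hkernel : ∀ c u, IntegrableOn (fun s => N * Real.exp (-ω * (t - s)) * c) (Iic u) :=
    fun c u => ((integrableOn_exp_neg_mul_sub_Iic hω t u).const_mul N).mul_const c
  have hfar : ∫ s in Iic (t - T), ‖F s‖ ≤ N * D / ω * Real.exp (-ω * T) := calc
    _ ≤ ∫ s in Iic (t - T), N * Real.exp (-ω * (t - s)) * D :=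
      setIntegral_mono_on (hu.mono_set (Iic_subset_Iic.2 (by linarith))).norm (hkernel D _)
        measurableSet_Iic fun s hs => norm_eAt_sub_apply_le hA (by linarith [mem_Iic.1 hs]) (hD s)
    _ = N * D / ω * Real.exp (-ω * T) := by
      rw [integral_mul_const, integral_const_mul, integral_exp_neg_mul_sub_Iic hω, sub_sub_cancel]
      ring
  have hnear : ∫ s in Ioc (t - T) t, ‖F s‖ ≤ N * C / ω := calc
    _ ≤ ∫ s in Ioc (t - T) t, N * Real.exp (-ω * (t - s)) * C :=
      setIntegral_mono_on (hu.mono_set Ioc_subset_Iic_self).norm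
        ((hkernel C t).mono_set Ioc_subset_Iic_self) measurableSet_Ioc
        fun s hs => norm_eAt_sub_apply_le hA hs.2 (hC s hs)
    _ ≤ ∫ s in Iic t, N * Real.exp (-ω * (t - s)) * C :=
      setIntegral_mono_set (hkernel C t) (ae_of_all _ fun s => by positivity)
        Ioc_subset_Iic_self.eventuallyLE
    _ = N * C / ω := by
      rw [integral_mul_const, integral_const_mul, integral_exp_neg_mul_sub_Iic hω, sub_self,
        mul_zero, Real.exp_zero]
      ring
  calc ‖∫ s in Iic t, F s‖ ≤ ∫ s in Iic t, ‖F s‖ := norm_integral_le_integral_norm _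
    _ = (∫ s in Iic (t - T), ‖F s‖) + ∫ s in Ioc (t - T) t, ‖F s‖ := by
      rw [← setIntegral_union (Iic_disjoint_Ioc le_rfl) measurableSet_Ioc
        (hu.mono_set (Iic_subset_Iic.2 (by linarith))).norm
        (hu.mono_set Ioc_subset_Iic_self).norm, Iic_union_Ioc_eq_Iic (by linarith)]
    _ ≤ N * D / ω * Real.exp (-ω * T) + N * C / ω := add_le_add hfar hnear

end Kernel

lemma le_of_window_contraction {v : ℝ → ℝ} {a b T c θ K : ℝ} (hT : 0 ≤ T) (hc : 0 ≤ c)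
    (hθ1 : θ < 1) (hK : ∀ t, v t ≤ K)
    (hstep : ∀ t ∈ Icc a b, a + T ≤ t → ∀ P, (∀ s ∈ Ioc (t - T) t, v s ≤ P) → v t ≤ c + θ * P) :
    ∀ k : ℕ, ∀ t ∈ Icc a b, a + k * T ≤ t → v t ≤ c / (1 - θ) + θ ^ k * K := by
  have h1θ : 0 < 1 - θ := by linarith
  intro k
  induction k with
  | zero =>
    intro t _ _
    simpa using (hK t).trans (le_add_of_nonneg_left (div_nonneg hc h1θ.le))
  | succ k ih =>
    intro t ht hkt
    have hkT : 0 ≤ k * T := by positivity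
    have hprev : a + k * T ≤ t - T := by push_cast at hkt; linarith
    refine (hstep t ht (by linarith) _ fun s hs =>
      ih s ⟨by linarith [hs.1], hs.2.trans ht.2⟩ (hprev.trans hs.1.le)).trans_eq ?_
    field_simp
    ring

lemma exists_delay_of_window_estimate {u v : ℝ → ℝ} {K α β θ ω : ℝ} (hω : 0 < ω) (hα : 0 ≤ α)
    (hβ : 0 ≤ β) (hθ0 : 0 ≤ θ) (hθ1 : θ < 1) (hK : ∀ t, v t ≤ K)
    (hstep : ∀ T > 0, ∀ t δ P, (∀ s ∈ Ioc (t - T) t, u s ≤ δ ∧ v s ≤ P) →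
      v t ≤ α * Real.exp (-ω * T) + β * δ + θ * P) :
    ∀ ε > 0, ∃ δ > 0, ∃ S ≥ 0, ∀ a b, (∀ s ∈ Icc a b, u s < δ) →
      ∀ t ∈ Icc (a + S) b, v t < ε := by
  intro ε hε
  have h1θ : 0 < 1 - θ := by linarith
  set η := ε * (1 - θ) / 3 with hη
  have hη0 : 0 < η := by positivity
  have hdecay : Tendsto (fun T => α * Real.exp (-ω * T)) atTop (nhds 0) := by
    simpa using (Real.tendsto_exp_atBot.comp
      (tendsto_id.const_mul_atTop_of_neg (neg_lt_zero.2 hω))).const_mul α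
  obtain ⟨T, hTη, hT⟩ := ((hdecay.eventually (gt_mem_nhds hη0)).and (eventually_gt_atTop 0)).exists
  have hcontract : Tendsto (fun k : ℕ => θ ^ k * K) atTop (nhds 0) := by
    simpa using (tendsto_pow_atTop_nhds_zero_of_lt_one hθ0 hθ1).mul_const K
  obtain ⟨k, hk⟩ := (hcontract.eventually (gt_mem_nhds (by positivity : 0 < ε / 3))).exists
  set δ := η / (β + 1)
  have hδ : 0 < δ := by positivity
  have hβδ : β * δ < η := by
    rw [mul_div_assoc', div_lt_iff₀ (by linarith)]
    nlinarith
  refine ⟨δ, hδ, k * T, by positivity, fun a b hu t ht => ?_⟩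
  have hkT : 0 ≤ k * T := by positivity
  have hwindow : ∀ t' ∈ Icc a b, a + T ≤ t' → ∀ P, (∀ s ∈ Ioc (t' - T) t', v s ≤ P) →
      v t' ≤ α * Real.exp (-ω * T) + β * δ + θ * P := fun t' ht' _ P hP =>
    hstep T hT t' δ P fun s hs => ⟨(hu s ⟨by linarith [hs.1], hs.2.trans ht'.2⟩).le, hP s hs⟩
  have hbound := le_of_window_contraction hT.le (by positivity) hθ1 hK hwindow k t
    ⟨by linarith [ht.1], ht.2⟩ ht.1
  have hfirst : (α * Real.exp (-ω * T) + β * δ) / (1 - θ) < 2 * ε / 3 := by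
    rw [div_lt_iff₀ h1θ]
    linarith
  linarith

lemma Proximal.of_exists_delay {m n : ℕ} {x xb : ℝ → Eu m} {y yb : ℝ → Eu n}
    (hprox : Proximal x xb)
    (h : ∀ ε > 0, ∃ δ > 0, ∃ S ≥ 0, ∀ a b, (∀ s ∈ Icc a b, ‖x s - xb s‖ < δ) →
      ∀ t ∈ Icc (a + S) b, ‖y t - yb t‖ < ε) :
    Proximal y yb := by
  intro ε hε E hE
  obtain ⟨δ, hδ, S, hS, hclose⟩ := h ε hε
  obtain ⟨a, l, hl, hdisj, hx⟩ := hprox δ hδ (E + S) (by linarith)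
  have hsub : ∀ i, Icc (a i + S) (a i + S + (l i - S)) ⊆ Icc (a i) (a i + l i) :=
    fun i => Icc_subset_Icc (by linarith) (by linarith)
  refine ⟨fun i => a i + S, fun i => l i - S, fun i => by linarith [hl i],
    fun i j hij => (hdisj hij).mono (hsub i) (hsub j), fun i t ht => hclose _ _ (hx i) t ?_⟩
  simpa only [add_add_sub_cancel] using ht

lemma norm_sub_le_of_window {m n : ℕ} {A : Matrix (Fin n) (Fin n) ℝ} {N ω M₀ L₂ L₃ : ℝ}
    (hω : 0 < ω) (hA : ∀ t : ℝ, 0 ≤ t → ‖eAt A t‖ ≤ N * Real.exp (-ω * t))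
    (hL₂ : 0 ≤ L₂) (hL₃ : 0 ≤ L₃) {g : Eu m → Eu n → Eu n} (hgb : ∀ x y, ‖g x y‖ ≤ M₀)
    (hg₂ : ∀ x₁ x₂ y, ‖g x₁ y - g x₂ y‖ ≤ L₂ * ‖x₁ - x₂‖)
    (hg₃ : ∀ x y₁ y₂, ‖g x y₁ - g x y₂‖ ≤ L₃ * ‖y₁ - y₂‖)
    {x xb : ℝ → Eu m} {y yb : ℝ → Eu n}
    (hy : ∀ t, y t = ∫ s in Iic t, eAt A (t - s) (g (x s) (y s)))
    (hyb : ∀ t, yb t = ∫ s in Iic t, eAt A (t - s) (g (xb s) (yb s)))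
    (hint : ∀ t, IntegrableOn (fun s => eAt A (t - s) (g (x s) (y s))) (Iic t))
    (hintb : ∀ t, IntegrableOn (fun s => eAt A (t - s) (g (xb s) (yb s))) (Iic t))
    {T t δ P : ℝ} (hT : 0 < T)
    (hwin : ∀ s ∈ Ioc (t - T) t, ‖x s - xb s‖ ≤ δ ∧ ‖y s - yb s‖ ≤ P) :
    ‖y t - yb t‖ ≤ N * (2 * M₀) / ω * Real.exp (-ω * T) + N * L₂ / ω * δ + N * L₃ / ω * P := by
  have hdiff : y t - yb t = ∫ s in Iic t, eAt A (t - s) (g (x s) (y s) - g (xb s) (yb s)) := by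
    rw [hy t, hyb t, ← integral_sub (hint t) (hintb t)]
    simp only [map_sub]
  rw [hdiff]
  have hu : IntegrableOn (fun s => eAt A (t - s) (g (x s) (y s) - g (xb s) (yb s))) (Iic t) :=
    ((hint t).sub (hintb t)).congr_fun (fun s _ => (map_sub _ _ _).symm) measurableSet_Iic
  refine (norm_setIntegral_eAt_sub_apply_le hω hA hT hu (D := 2 * M₀) (C := L₂ * δ + L₃ * P)
    (fun s => (norm_sub_le _ _).trans (by linarith [hgb (x s) (y s), hgb (xb s) (yb s)]))
    fun s hs => ?_).trans_eq (by ring)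
  calc ‖g (x s) (y s) - g (xb s) (yb s)‖
      ≤ ‖g (x s) (y s) - g (xb s) (y s)‖ + ‖g (xb s) (y s) - g (xb s) (yb s)‖ :=
        norm_sub_le_norm_sub_add_norm_sub _ _ _
    _ ≤ L₂ * ‖x s - xb s‖ + L₃ * ‖y s - yb s‖ := add_le_add (hg₂ _ _ _) (hg₃ _ _ _)
    _ ≤ L₂ * δ + L₃ * P := by gcongr <;> [exact (hwin s hs).1; exact (hwin s hs).2]

theorem stmt11_general {m n : ℕ} (A : Matrix (Fin n) (Fin n) ℝ) (N ω M₀ L₂ L₃ : ℝ)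
    (hN : 0 < N) (hω : 0 < ω) (hM₀ : 0 < M₀) (hL₂ : 0 < L₂) (hL₃ : 0 < L₃)
    (hA : ∀ t : ℝ, 0 ≤ t → ‖eAt A t‖ ≤ N * Real.exp (-ω * t))
    (g : Eu m → Eu n → Eu n)
    (hgc : Continuous fun p : Eu m × Eu n => g p.1 p.2)
    (hgb : ∀ x y, ‖g x y‖ ≤ M₀)
    (hg₂ : ∀ x₁ x₂ y, ‖g x₁ y - g x₂ y‖ ≤ L₂ * ‖x₁ - x₂‖)
    (hg₃ : ∀ x y₁ y₂, ‖g x y₁ - g x y₂‖ ≤ L₃ * ‖y₁ - y₂‖)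
    (hcond : N * L₃ - ω < 0)
    (x xb : ℝ → Eu m) (hxc : Continuous x) (hxbc : Continuous xb)
    (y yb : ℝ → Eu n)
    (hyB : ∃ B, ∀ t, ‖y t‖ ≤ B) (hybB : ∃ B, ∀ t, ‖yb t‖ ≤ B)
    (hy : ∀ t, y t = ∫ s in Iic t, eAt A (t - s) (g (x s) (y s)))
    (hyb : ∀ t, yb t = ∫ s in Iic t, eAt A (t - s) (g (xb s) (yb s)))
    (hprox : Proximal x xb) :
    Proximal y yb := by
  obtain ⟨B, hB⟩ := hyB
  obtain ⟨Bb, hBb⟩ := hybB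
  have hint := integrableOn_eAt_sub_apply hω hA
    (aestronglyMeasurable_of_eq_integral hgc hxc hy) fun s => hgb (x s) (y s)
  have hintb := integrableOn_eAt_sub_apply hω hA
    (aestronglyMeasurable_of_eq_integral hgc hxbc hyb) fun s => hgb (xb s) (yb s)
  have hθ : N * L₃ / ω < 1 := (div_lt_one hω).2 (by linarith)
  have hK : ∀ t, ‖y t - yb t‖ ≤ B + Bb :=
    fun t => (norm_sub_le _ _).trans (add_le_add (hB t) (hBb t))
  refine hprox.of_exists_delay (exists_delay_of_window_estimate (u := fun t => ‖x t - xb t‖)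
    (α := N * (2 * M₀) / ω) (β := N * L₂ / ω) hω (by positivity) (by positivity) (by positivity)
    hθ hK fun T hT t δ P hwin => ?_)
  exact norm_sub_le_of_window hω hA hL₂.le hL₃.le hgb hg₂ hg₃ hy hyb hint hintb hT hwin

/-- Proximality of (x, x̄) implies proximality of (φₓ, φ\_x̄). -/
theorem stmt11 {m n : ℕ} (A : Matrix (Fin n) (Fin n) ℝ) (N ω M₀ L₂ L₃ : ℝ)
    (hN : 0 < N) (hω : 0 < ω) (hM₀ : 0 < M₀) (hL₂ : 0 < L₂) (hL₃ : 0 < L₃)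
    (hA : ∀ t : ℝ, 0 ≤ t → ‖eAt A t‖ ≤ N * Real.exp (-ω * t))
    (g : Eu m → Eu n → Eu n)
    (hgc : Continuous fun p : Eu m × Eu n => g p.1 p.2)
    (hgb : ∀ x y, ‖g x y‖ ≤ M₀)
    (hg₂ : ∀ x₁ x₂ y, ‖g x₁ y - g x₂ y‖ ≤ L₂ * ‖x₁ - x₂‖)
    (hg₃ : ∀ x y₁ y₂, ‖g x y₁ - g x y₂‖ ≤ L₃ * ‖y₁ - y₂‖)
    (hcond : N * L₃ - ω < 0)
    (x xb : ℝ → Eu m) (hxc : Continuous x) (hxbc : Continuous xb)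
    (hxB : ∃ H, ∀ t, ‖x t‖ ≤ H) (hxbB : ∃ H, ∀ t, ‖xb t‖ ≤ H)
    (y yb : ℝ → Eu n)
    (hyB : ∃ B, ∀ t, ‖y t‖ ≤ B) (hybB : ∃ B, ∀ t, ‖yb t‖ ≤ B)
    (hy : ∀ t, y t = ∫ s in Iic t, eAt A (t - s) (g (x s) (y s)))
    (hyb : ∀ t, yb t = ∫ s in Iic t, eAt A (t - s) (g (xb s) (yb s)))
    (hprox : Proximal x xb) :
    Proximal y yb :=
  stmt11_general A N ω M₀ L₂ L₃ hN hω hM₀ hL₂ hL₃ hA g hgc hgb hg₂ hg₃ hcond x xb hxc hxbc y yb hyB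
    hybB hy hyb hprox
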